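/- arXiv:1510.08133 — 2 statements merged into one kernel-verified Lean document; each statement's English description precedes it below -/
import Mathlib

section
/- If the constraint S·P = 0 and ‖S‖ = 1 hold at t = 0, then they hold for all time along any solution of dS/dt = μ² S × (P × S), dP/dt = μ² P × (P × S). -/
open Matrix

/-- Euclidean norm on `ℝ³` (as `Fin 3 → ℝ`). -/
noncomputable def enorm3 (v : Fin 3 → ℝ) : ℝ := Real.sqrt (v ⬝ᵥ v)

/-!
Both equations say that `S` and `P` rotate with the same angular velocity `ω = μ² P × S`:
`S' = S × ω` and `P' = P × ω`. The inner product of two vectors rotating with a common angular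
velocity is constant, because `(u × ω) · v + u · (v × ω) = 0`; applied to `S · P` and `S · S`
this preserves both constraints.
-/

theorem HasDerivAt.dotProduct {𝕜 ι : Type*} [NontriviallyNormedField 𝕜] [Fintype ι]
    {f g : 𝕜 → ι → 𝕜} {f' g' : ι → 𝕜} {t : 𝕜}
    (hf : HasDerivAt f f' t) (hg : HasDerivAt g g' t) :
    HasDerivAt (fun s => f s ⬝ᵥ g s) (f' ⬝ᵥ g t + f t ⬝ᵥ g') t := by
  have := HasDerivAt.fun_sum (u := Finset.univ) fun i _ =>
    (hasDerivAt_pi.1 hf i).fun_mul (hasDerivAt_pi.1 hg i)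
  simpa only [_root_.dotProduct, Finset.sum_add_distrib] using this

theorem cross_dot_add_dot_cross {R : Type*} [CommRing R] (u v w : Fin 3 → R) :
    u ⨯₃ w ⬝ᵥ v + u ⬝ᵥ v ⨯₃ w = 0 := by
  rw [dotProduct_comm, triple_product_permutation, ← cross_anticomm, dotProduct_neg,
    neg_add_cancel]

theorem dotProduct_const_of_hasDerivAt_cross {u v ω : ℝ → Fin 3 → ℝ}
    (hu : ∀ t, HasDerivAt u (u t ⨯₃ ω t) t) (hv : ∀ t, HasDerivAt v (v t ⨯₃ ω t) t)
    (t : ℝ) : u t ⬝ᵥ v t = u 0 ⬝ᵥ v 0 := by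
  have hderiv : ∀ s, HasDerivAt (fun s => u s ⬝ᵥ v s) 0 s := fun s => by
    simpa only [cross_dot_add_dot_cross] using (hu s).dotProduct (hv s)
  exact is_const_of_deriv_eq_zero (fun s => (hderiv s).differentiableAt)
    (fun s => (hderiv s).deriv) t 0

theorem single_spin_constraints_preserved (μ : ℝ) (S P : ℝ → Fin 3 → ℝ)
    (hS : ∀ t : ℝ, HasDerivAt S
      (μ ^ 2 • crossProduct (S t) (crossProduct (P t) (S t))) t)
    (hP : ∀ t : ℝ, HasDerivAt P
      (μ ^ 2 • crossProduct (P t) (crossProduct (P t) (S t))) t)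
    (h0 : S 0 ⬝ᵥ P 0 = 0) (hn : enorm3 (S 0) = 1) :
    ∀ t : ℝ, S t ⬝ᵥ P t = 0 ∧ enorm3 (S t) = 1 := by
  set ω : ℝ → Fin 3 → ℝ := fun t => μ ^ 2 • P t ⨯₃ S t
  have hSω : ∀ t, HasDerivAt S (S t ⨯₃ ω t) t := fun t => by
    simpa only [ω, map_smul] using hS t
  have hPω : ∀ t, HasDerivAt P (P t ⨯₃ ω t) t := fun t => by
    simpa only [ω, map_smul] using hP t
  intro t
  refine ⟨?_, ?_⟩
  · rw [dotProduct_const_of_hasDerivAt_cross hSω hPω, h0]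
  · rw [enorm3, dotProduct_const_of_hasDerivAt_cross hSω hSω, ← enorm3, hn]
end

section
/- In the extremal equations for two identical coupled spins, with B = μ(P₁×S₁ + P₂×S₂) and κ = (P₁-P₂)·(S₁×S₂), and dynamics dS₁/dt = μ S₁×B + κ S₁×S₂, dS₂/dt = μ S₂×B + κ S₂×S₁, dP₁/dt = μ P₁×B + κ (P₁-P₂)×S₂, dP₂/dt = μ P₂×B + κ (P₂-P₁)×S₁, the vector B(t) is constant in time: dB/dt = 0. -/
/-!
Each of the four vectors moves by the infinitesimal rotation `v ↦ μ v × B` plus a `κ`-coupling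
term. Since `v ↦ v × B` is a derivation of the cross product (Jacobi identity), the rotation part
of `d/dt (P₁ × S₁ + P₂ × S₂)` is `(P₁ × S₁ + P₂ × S₂) × μB`, so its contribution to `dB/dt` is
`μB × B = 0`. The coupling terms add up to `κ` times a Jacobi sum for `P₁ - P₂, S₁, S₂`, which
vanishes whatever `κ` is.
-/

open Matrix

theorem HasDerivAt.cross {𝕜 : Type*} [NontriviallyNormedField 𝕜] [CompleteSpace 𝕜]
    {f g : 𝕜 → Fin 3 → 𝕜} {f' g' : Fin 3 → 𝕜} {t : 𝕜}
    (hf : HasDerivAt f f' t) (hg : HasDerivAt g g' t) :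
    HasDerivAt (fun s => f s ⨯₃ g s) (f' ⨯₃ g t + f t ⨯₃ g') t := by
  simpa [add_comm] using
    (crossProduct (R := 𝕜)).toContinuousBilinearMap.hasDerivAt_of_bilinear
      (fun _ => hf) (fun _ => hg)

section

variable {R : Type*} [CommRing R]

theorem cross_cross_add_cross_cross (u v w : Fin 3 → R) :
    u ⨯₃ w ⨯₃ v + u ⨯₃ (v ⨯₃ w) = u ⨯₃ v ⨯₃ w := by
  rw [leibniz_cross, ← cross_anticomm v]
  abel

theorem cross_sub_cross_add_cross_cross (d u v : Fin 3 → R) :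
    d ⨯₃ v ⨯₃ u - d ⨯₃ u ⨯₃ v + d ⨯₃ (u ⨯₃ v) = 0 := by
  rw [← cross_anticomm u, ← cross_anticomm v (d ⨯₃ u), ← cross_anticomm v d, map_neg, neg_neg,
    sub_neg_eq_add, ← jacobi_cross d u v]
  abel

theorem coupled_spins_cross_sum_deriv (μ κ : R) (S₁ S₂ P₁ P₂ B : Fin 3 → R) :
    (μ • P₁ ⨯₃ B + κ • (P₁ - P₂) ⨯₃ S₂) ⨯₃ S₁ + P₁ ⨯₃ (μ • S₁ ⨯₃ B + κ • S₁ ⨯₃ S₂) +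
      ((μ • P₂ ⨯₃ B + κ • (P₂ - P₁) ⨯₃ S₁) ⨯₃ S₂ + P₂ ⨯₃ (μ • S₂ ⨯₃ B + κ • S₂ ⨯₃ S₁)) =
      (μ • (P₁ ⨯₃ S₁ + P₂ ⨯₃ S₂)) ⨯₃ B := by
  have h₁ := cross_cross_add_cross_cross P₁ S₁ B
  have h₂ := cross_cross_add_cross_cross P₂ S₂ B
  have hκ := cross_sub_cross_add_cross_cross (P₁ - P₂) S₁ S₂
  rw [← cross_anticomm S₁ S₂, ← neg_sub P₁ P₂]
  simp only [map_add, map_sub, map_neg, map_smul, LinearMap.add_apply, LinearMap.sub_apply,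
    LinearMap.neg_apply, LinearMap.smul_apply] at h₁ h₂ hκ ⊢
  linear_combination (norm := module) μ • h₁ + μ • h₂ + κ • hκ

end

theorem extremal_coupled_B_constant_general (μ : ℝ)
    (S₁ S₂ P₁ P₂ : ℝ → Fin 3 → ℝ) (B : ℝ → Fin 3 → ℝ) (κ : ℝ → ℝ)
    (hB : ∀ t : ℝ, B t = μ • (crossProduct (P₁ t) (S₁ t) + crossProduct (P₂ t) (S₂ t)))
    (hS₁ : ∀ t : ℝ, HasDerivAt S₁
      (μ • crossProduct (S₁ t) (B t) + κ t • crossProduct (S₁ t) (S₂ t)) t)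
    (hS₂ : ∀ t : ℝ, HasDerivAt S₂
      (μ • crossProduct (S₂ t) (B t) + κ t • crossProduct (S₂ t) (S₁ t)) t)
    (hP₁ : ∀ t : ℝ, HasDerivAt P₁
      (μ • crossProduct (P₁ t) (B t) + κ t • crossProduct (P₁ t - P₂ t) (S₂ t)) t)
    (hP₂ : ∀ t : ℝ, HasDerivAt P₂
      (μ • crossProduct (P₂ t) (B t) + κ t • crossProduct (P₂ t - P₁ t) (S₁ t)) t) :
    ∀ t : ℝ, HasDerivAt B 0 t := by
  intro t
  have hB' : B = fun s => μ • (P₁ s ⨯₃ S₁ s + P₂ s ⨯₃ S₂ s) := funext hB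
  have hderiv := (((hP₁ t).cross (hS₁ t)).add ((hP₂ t).cross (hS₂ t))).const_smul μ
  rw [coupled_spins_cross_sum_deriv, ← hB t, cross_self, smul_zero] at hderiv
  rwa [hB']

theorem extremal_coupled_B_constant (μ : ℝ)
    (S₁ S₂ P₁ P₂ : ℝ → Fin 3 → ℝ) (B : ℝ → Fin 3 → ℝ) (κ : ℝ → ℝ)
    (hB : ∀ t : ℝ, B t = μ • (crossProduct (P₁ t) (S₁ t) + crossProduct (P₂ t) (S₂ t)))
    (hκ : ∀ t : ℝ, κ t = (P₁ t - P₂ t) ⬝ᵥ crossProduct (S₁ t) (S₂ t))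
    (hS₁ : ∀ t : ℝ, HasDerivAt S₁
      (μ • crossProduct (S₁ t) (B t) + κ t • crossProduct (S₁ t) (S₂ t)) t)
    (hS₂ : ∀ t : ℝ, HasDerivAt S₂
      (μ • crossProduct (S₂ t) (B t) + κ t • crossProduct (S₂ t) (S₁ t)) t)
    (hP₁ : ∀ t : ℝ, HasDerivAt P₁
      (μ • crossProduct (P₁ t) (B t) + κ t • crossProduct (P₁ t - P₂ t) (S₂ t)) t)
    (hP₂ : ∀ t : ℝ, HasDerivAt P₂
      (μ • crossProduct (P₂ t) (B t) + κ t • crossProduct (P₂ t - P₁ t) (S₁ t)) t)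
    (hc₁ : ∀ t : ℝ, S₁ t ⬝ᵥ P₁ t = 0) (hc₂ : ∀ t : ℝ, S₂ t ⬝ᵥ P₂ t = 0) :
    ∀ t : ℝ, HasDerivAt B 0 t :=
  extremal_coupled_B_constant_general μ S₁ S₂ P₁ P₂ B κ hB hS₁ hS₂ hP₁ hP₂
end
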